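/- arXiv:dg-ga/9603009 — 3 statements merged into one kernel-verified Lean document; each statement's English description precedes it below -/
import Mathlib

section
/- Let U ⊆ ℝⁿ be open and let L : U × Matrix(r×n, ℝ) → ℝ be smooth and satisfy, for each fixed x ∈ U, the fundamental equations in the entries of ẋ: (∂²L/∂ẋ_F^A∂ẋ_G^B) + (∂²L/∂ẋ_G^A∂ẋ_F^B) = 0 for all rows F, G ∈ {1,…,r} and columns A, B ∈ {1,…,n}. Then for every open V ⊆ ℝ^r, every smooth map γ : V → U, every A ∈ {1,…,n} and every t ∈ V, the Euler–Lagrange expression contains no second derivatives of γ; explicitly, Σ_F ∂/∂t^F [ (∂L/∂ẋ_F^A)(γ(t), Dγ(t)) ] = Σ_{F,B} (∂γ^B/∂t^F)(t) · (∂²L/∂x^B∂ẋ_F^A)(γ(t), Dγ(t)), where Dγ(t) is the r×n matrix ((∂γ^A/∂t^F)(t)). -/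
open MeasureTheory
open scoped BigOperators

noncomputable section

/-- Product of matrices given as functions (entry `(i,k)` is `∑ j, M i j * N j k`). -/
def mmul {a b c : ℕ} (M : Fin a → Fin b → ℝ) (N : Fin b → Fin c → ℝ) :
    Fin a → Fin c → ℝ :=
  fun i k => ∑ j, M i j * N j k

/-- Determinant of a square matrix given as a function. -/
def fdet {a : ℕ} (M : Fin a → Fin a → ℝ) : ℝ :=
  Matrix.det (Matrix.of M)

/-- Partial derivative of a function of a matrix with respect to the `(i,j)` entry. -/
def pdM {a b : ℕ} (L : (Fin a → Fin b → ℝ) → ℝ) (i : Fin a) (j : Fin b)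
    (m : Fin a → Fin b → ℝ) : ℝ :=
  deriv (fun t : ℝ => L (fun i' j' => m i' j' + (if i' = i ∧ j' = j then t else 0))) 0

/-- Partial derivative of a function of a vector with respect to the `i`-th coordinate. -/
def pdV {a : ℕ} (f : (Fin a → ℝ) → ℝ) (i : Fin a) (x : Fin a → ℝ) : ℝ :=
  deriv (fun t : ℝ => f (fun i' => x i' + (if i' = i then t else 0))) 0

/-- The fundamental equations for a function of an `a × b` matrix:
for all rows `i₁, i₂` and columns `j₁, j₂`,
`∂²L/∂m_{i₁}^{j₁}∂m_{i₂}^{j₂} + ∂²L/∂m_{i₂}^{j₁}∂m_{i₁}^{j₂} = 0`. -/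
def FundEqs {a b : ℕ} (L : (Fin a → Fin b → ℝ) → ℝ) : Prop :=
  ∀ (i₁ i₂ : Fin a) (j₁ j₂ : Fin b) (m : Fin a → Fin b → ℝ),
    pdM (fun m' => pdM L i₂ j₂ m') i₁ j₁ m + pdM (fun m' => pdM L i₁ j₂ m') i₂ j₁ m = 0

/-- The velocity matrix of a path `γ`: `(vel γ t) F A = ∂γ^A/∂t^F (t)`. -/
def vel {r n : ℕ} (γ : (Fin r → ℝ) → (Fin n → ℝ)) (t : Fin r → ℝ) :
    Fin r → Fin n → ℝ :=
  fun F A => pdV (fun s => γ s A) F t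

/-- The matrix of gradients of a copath `f`: `(grad f x) A K = ∂f^K/∂x^A (x)`. -/
def grad {n k : ℕ} (f : (Fin n → ℝ) → (Fin k → ℝ)) (x : Fin n → ℝ) :
    Fin n → Fin k → ℝ :=
  fun A K => pdV (fun y => f y K) A x

/-- An even `r`-form on an open set `U ⊆ ℝⁿ`: a smooth function `L(x, ẋ)` of a point
`x` and an `r × n` matrix `ẋ` which is covariant (`L(x, h·ẋ) = det h · L(x, ẋ)` for
invertible `h`) and satisfies the fundamental equations in the entries of `ẋ`. -/
def IsEvenForm {n r : ℕ} (U : Set (Fin n → ℝ))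
    (L : (Fin n → ℝ) → (Fin r → Fin n → ℝ) → ℝ) : Prop :=
  ContDiffOn ℝ (⊤ : ℕ∞)
      (fun q : (Fin n → ℝ) × (Fin r → Fin n → ℝ) => L q.1 q.2)
      (U ×ˢ (Set.univ : Set (Fin r → Fin n → ℝ))) ∧
  (∀ x ∈ U, ∀ (xdot : Fin r → Fin n → ℝ) (h : Fin r → Fin r → ℝ), fdet h ≠ 0 →
    L x (mmul h xdot) = fdet h * L x xdot) ∧
  (∀ x ∈ U, FundEqs (L x))

/-- The differential of a Lagrangian of paths `L(x, ẋ)`: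
`ΔL(x, (ẋ; ẏ)) = (−1)^r Σ_A ẏ^A (∂L/∂x^A − Σ_{F,B} ẋ_F^B ∂²L/∂x^B∂ẋ_F^A)`,
where `ẋ` consists of the first `r` rows and `ẏ` is the last row of the argument. -/
def Dform {n r : ℕ} (L : (Fin n → ℝ) → (Fin r → Fin n → ℝ) → ℝ) :
    (Fin n → ℝ) → (Fin (r + 1) → Fin n → ℝ) → ℝ :=
  fun x M => (-1 : ℝ) ^ r * ∑ A, M (Fin.last r) A *
    (pdV (fun x' => L x' (fun F => M (Fin.castSucc F))) A x
      - ∑ F, ∑ B, M (Fin.castSucc F) B *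
          pdV (fun x' => pdM (L x') F A (fun G => M (Fin.castSucc G))) B x)

/-- An even mixed form of codegree `k` and additional degree `r` on an open set
`U ⊆ ℝⁿ`: a smooth function `𝓛(x, p, w)` which is right-covariant, left-covariant,
admissible, and satisfies the fundamental equations in the entries of the stacked
`(n+r) × k` matrix (`p` over `w`). -/
def IsMixedForm {n k r : ℕ} (U : Set (Fin n → ℝ))
    (L : (Fin n → ℝ) → (Fin n → Fin k → ℝ) → (Fin r → Fin k → ℝ) → ℝ) : Prop :=
  ContDiffOn ℝ (⊤ : ℕ∞)
      (fun q : (Fin n → ℝ) × (Fin n → Fin k → ℝ) × (Fin r → Fin k → ℝ) =>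
        L q.1 q.2.1 q.2.2)
      (U ×ˢ (Set.univ : Set ((Fin n → Fin k → ℝ) × (Fin r → Fin k → ℝ)))) ∧
  (∀ x ∈ U, ∀ (p : Fin n → Fin k → ℝ) (w : Fin r → Fin k → ℝ) (g : Fin k → Fin k → ℝ),
    fdet g ≠ 0 → L x (mmul p g) (mmul w g) = fdet g * L x p w) ∧
  (∀ x ∈ U, ∀ (p : Fin n → Fin k → ℝ) (w : Fin r → Fin k → ℝ) (h : Fin r → Fin r → ℝ),
    fdet h ≠ 0 → L x p (mmul h w) = fdet h * L x p w) ∧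
  (∀ x ∈ U, ∀ (p : Fin n → Fin k → ℝ) (w : Fin r → Fin k → ℝ) (a : Fin n → Fin r → ℝ),
    L x (p + mmul a w) w = L x p w) ∧
  (∀ x ∈ U, FundEqs (fun m : Fin (n + r) → Fin k → ℝ =>
    L x (fun A => m (Fin.castAdd r A)) (fun F => m (Fin.natAdd n F))))

/-- The differential of a mixed Lagrangian `𝓛(x, p, w)`:
`Δ𝓛(x, p, ŵ) = (−1)^r Σ_{K,A} w'^K ∂²𝓛/∂x^A∂p_A^K (x, p, w)`, where `ŵ` has first
`r` rows `w` and last row `w'`. -/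
def Dmix {n k r : ℕ}
    (L : (Fin n → ℝ) → (Fin n → Fin k → ℝ) → (Fin r → Fin k → ℝ) → ℝ) :
    (Fin n → ℝ) → (Fin n → Fin k → ℝ) → (Fin (r + 1) → Fin k → ℝ) → ℝ :=
  fun x p what => (-1 : ℝ) ^ r * ∑ K, ∑ A, what (Fin.last r) K *
    pdV (fun x' => pdM (fun p' => L x' p' (fun F => what (Fin.castSucc F))) A K p) A x

/-- An even dual form of codegree `k` on an open set `U ⊆ ℝⁿ`: a smooth function
`𝓛(x, p)` of a point `x` and an `n × k` matrix `p` of momenta which is covariant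
(`𝓛(x, p·g) = det g · 𝓛(x, p)` for invertible `g`) and satisfies the fundamental
equations in the entries of `p`. -/
def IsDualForm {n k : ℕ} (U : Set (Fin n → ℝ))
    (L : (Fin n → ℝ) → (Fin n → Fin k → ℝ) → ℝ) : Prop :=
  ContDiffOn ℝ (⊤ : ℕ∞)
      (fun q : (Fin n → ℝ) × (Fin n → Fin k → ℝ) => L q.1 q.2)
      (U ×ˢ (Set.univ : Set (Fin n → Fin k → ℝ))) ∧
  (∀ x ∈ U, ∀ (p : Fin n → Fin k → ℝ) (g : Fin k → Fin k → ℝ), fdet g ≠ 0 →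
    L x (mmul p g) = fdet g * L x p) ∧
  (∀ x ∈ U, FundEqs (L x))

/-- The identity matrix as a function. -/
def idm (n : ℕ) : Fin n → Fin n → ℝ := fun i j => if i = j then 1 else 0

/-! By the chain rule, `∂/∂t^F` of `(∂L/∂ẋ_F^A)(γ, Dγ)` is a term through `∂γ/∂t^F`, which gives
the right-hand side, plus the acceleration term
`Σ_{G,B} ∂²γ^B/∂t^F∂t^G · ∂²L/∂ẋ_G^B∂ẋ_F^A`. Summed over `F`, the accelerations are symmetric
in `F, G` while, by the fundamental equations, their coefficients are antisymmetric in `F, G`;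
so the acceleration terms cancel. -/

open Set Filter Topology

section LineDeriv

variable {E F G : Type*} [NormedAddCommGroup E] [NormedSpace ℝ E]
  [NormedAddCommGroup F] [NormedSpace ℝ F] [NormedAddCommGroup G] [NormedSpace ℝ G]

theorem lineDeriv_comp_prodMk_left (f : E × F → G) (x : E) (y : F) (v : E) :
    lineDeriv ℝ (fun x' => f (x', y)) x v = lineDeriv ℝ f (x, y) (v, 0) := by
  simp [lineDeriv]

theorem lineDeriv_comp_prodMk_right (f : E × F → G) (x : E) (y : F) (w : F) :
    lineDeriv ℝ (fun y' => f (x, y')) y w = lineDeriv ℝ f (x, y) (0, w) := by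
  simp [lineDeriv]

theorem ContDiffOn.lineDeriv {f : E → G} {s : Set E} {m n : WithTop ℕ∞}
    (hf : ContDiffOn ℝ n f s) (hs : IsOpen s) (hmn : m + 1 ≤ n) (v : E) :
    ContDiffOn ℝ m (fun x => lineDeriv ℝ f x v) s := by
  refine ((hf.fderiv_of_isOpen hs hmn).clm_apply (contDiffOn_const (c := v))).congr
    fun x hx => ?_
  have hn : n ≠ 0 := ne_bot_of_le_ne_bot one_ne_zero (le_add_self.trans hmn)
  exact ((hf.contDiffAt (hs.mem_nhds hx)).differentiableAt hn).lineDeriv_eq_fderiv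

theorem ContDiffAt.lineDeriv_lineDeriv_comm {f : E → G} {x : E} (hf : ContDiffAt ℝ 2 f x)
    (v w : E) :
    lineDeriv ℝ (fun y => lineDeriv ℝ f y v) x w
      = lineDeriv ℝ (fun y => lineDeriv ℝ f y w) x v := by
  have hf' : DifferentiableAt ℝ (fderiv ℝ f) x :=
    (hf.fderiv_right (m := 1) le_rfl).differentiableAt one_ne_zero
  have key : ∀ u u',
      lineDeriv ℝ (fun y => lineDeriv ℝ f y u) x u' = fderiv ℝ (fderiv ℝ f) x u' u := by
    intro u u'
    have hev : (fun y => lineDeriv ℝ f y u) =ᶠ[𝓝 x] fun y => fderiv ℝ f y u := by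
      filter_upwards [hf.eventually (by simp)] with y hy
      exact (hy.differentiableAt two_ne_zero).lineDeriv_eq_fderiv
    rw [hev.lineDeriv_eq, (hf'.clm_apply (differentiableAt_const u)).lineDeriv_eq_fderiv,
      fderiv_clm_apply hf' (differentiableAt_const u)]
    simp
  rw [key, key]
  exact hf.isSymmSndFDerivAt (by simp) w v

end LineDeriv

theorem Finset.sum_sum_eq_zero_of_antisymm {ι R : Type*} [Fintype ι] [NonAssocRing R]
    [NoZeroDivisors R] [CharZero R] (f : ι → ι → R) (hf : ∀ i j, f i j = -f j i) :
    ∑ i, ∑ j, f i j = 0 := by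
  rw [← CharZero.eq_neg_self_iff]
  conv_rhs => rw [Finset.sum_comm, ← Finset.sum_neg_distrib]
  simp only [← Finset.sum_neg_distrib, ← hf]

theorem pdV_eq_lineDeriv {a : ℕ} (f : (Fin a → ℝ) → ℝ) (i : Fin a) (x : Fin a → ℝ) :
    pdV f i x = lineDeriv ℝ f x (Pi.single i 1) := by
  simp only [pdV, lineDeriv]
  congr! with τ i'
  simp [Pi.single_apply]

theorem pdM_eq_lineDeriv {a b : ℕ} (L : (Fin a → Fin b → ℝ) → ℝ) (i : Fin a) (j : Fin b)
    (m : Fin a → Fin b → ℝ) :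
    pdM L i j m = lineDeriv ℝ L m (Pi.single i (Pi.single j 1)) := by
  simp only [pdM, lineDeriv]
  congr 1
  funext τ
  congr 1
  funext i' j'
  by_cases hi : i' = i <;> by_cases hj : j' = j <;> simp [hi, hj]

theorem pdV_clm_comp {a : ℕ} {E : Type*} [NormedAddCommGroup E] [NormedSpace ℝ E]
    {g : (Fin a → ℝ) → E} {t : Fin a → ℝ} (π : E →L[ℝ] ℝ) (hg : DifferentiableAt ℝ g t)
    (i : Fin a) :
    pdV (fun s => π (g s)) i t = π (fderiv ℝ g t (Pi.single i 1)) := by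
  have hcomp : HasFDerivAt (fun s => π (g s)) (π.comp (fderiv ℝ g t)) t :=
    π.hasFDerivAt.comp t hg.hasFDerivAt
  rw [pdV_eq_lineDeriv, (hcomp.hasLineDerivAt _).lineDeriv]
  rfl

theorem ContinuousLinearMap.apply_prod_eq_sum {b c d : ℕ}
    (φ : (Fin b → ℝ) × (Fin c → Fin d → ℝ) →L[ℝ] ℝ) (u : Fin b → ℝ) (w : Fin c → Fin d → ℝ) :
    φ (u, w) = ∑ B, u B * φ (Pi.single B 1, 0)
      + ∑ G, ∑ B, w G B * φ (0, Pi.single G (Pi.single B 1)) := by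
  have hdecomp : ((u, w) : (Fin b → ℝ) × (Fin c → Fin d → ℝ))
      = ∑ B, u B • (Pi.single B 1, 0) + ∑ G, ∑ B, w G B • (0, Pi.single G (Pi.single B 1)) := by
    ext <;> simp [Prod.fst_sum, Prod.snd_sum, Finset.sum_apply, Pi.single_apply]
  rw [hdecomp]
  simp only [map_add, map_sum, map_smul, smul_eq_mul]

theorem pdV_comp_prodMk {a b c d : ℕ} {ψ : (Fin b → ℝ) × (Fin c → Fin d → ℝ) → ℝ}
    {g : (Fin a → ℝ) → Fin b → ℝ} {h : (Fin a → ℝ) → Fin c → Fin d → ℝ} {t : Fin a → ℝ}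
    (hψ : DifferentiableAt ℝ ψ (g t, h t)) (hg : DifferentiableAt ℝ g t)
    (hh : DifferentiableAt ℝ h t) (i : Fin a) :
    pdV (fun s => ψ (g s, h s)) i t
      = ∑ B, pdV (fun s => g s B) i t * pdV (fun x => ψ (x, h t)) B (g t)
        + ∑ G, ∑ B, pdV (fun s => h s G B) i t * pdM (fun m => ψ (g t, m)) G B (h t) := by
  have hcomp : HasFDerivAt (fun s => ψ (g s, h s))
      ((fderiv ℝ ψ (g t, h t)).comp ((fderiv ℝ g t).prod (fderiv ℝ h t))) t :=
    hψ.hasFDerivAt.comp t (hg.hasFDerivAt.prodMk hh.hasFDerivAt)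
  rw [pdV_eq_lineDeriv, (hcomp.hasLineDerivAt _).lineDeriv, ContinuousLinearMap.comp_apply,
    ContinuousLinearMap.prod_apply, ContinuousLinearMap.apply_prod_eq_sum]
  refine congrArg₂ (· + ·) (Finset.sum_congr rfl fun B _ => ?_)
    (Finset.sum_congr rfl fun G _ => Finset.sum_congr rfl fun B _ => ?_) <;> congr 1
  · exact (pdV_clm_comp (.proj B) hg i).symm
  · rw [pdV_eq_lineDeriv, lineDeriv_comp_prodMk_left, hψ.lineDeriv_eq_fderiv]
  · exact (pdV_clm_comp ((ContinuousLinearMap.proj (R := ℝ) (φ := fun _ : Fin d => ℝ) B).comp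
      (.proj (R := ℝ) (φ := fun _ : Fin c => Fin d → ℝ) G)) hh i).symm
  · rw [pdM_eq_lineDeriv, lineDeriv_comp_prodMk_right, hψ.lineDeriv_eq_fderiv]

theorem pdV_vel_comm {r n : ℕ} {γ : (Fin r → ℝ) → Fin n → ℝ} {t : Fin r → ℝ}
    (hγ : ContDiffAt ℝ 2 γ t) (F G : Fin r) (B : Fin n) :
    pdV (fun s => vel γ s G B) F t = pdV (fun s => vel γ s F B) G t := by
  simp only [vel, pdV_eq_lineDeriv]
  exact (contDiffAt_pi.1 hγ B).lineDeriv_lineDeriv_comm _ _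

theorem ContDiffOn.vel {r n : ℕ} {γ : (Fin r → ℝ) → Fin n → ℝ} {V : Set (Fin r → ℝ)}
    {m k : WithTop ℕ∞} (hγ : ContDiffOn ℝ k γ V) (hV : IsOpen V) (hmk : m + 1 ≤ k) :
    ContDiffOn ℝ m (vel γ) V := by
  refine contDiffOn_pi.2 fun G => contDiffOn_pi.2 fun B => ?_
  simp only [_root_.vel, pdV_eq_lineDeriv]
  exact (contDiffOn_pi.1 hγ B).lineDeriv hV hmk _

theorem ContDiffOn.pdM_uncurry {n r : ℕ} {U : Set (Fin n → ℝ)}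
    {L : (Fin n → ℝ) → (Fin r → Fin n → ℝ) → ℝ} {m k : WithTop ℕ∞}
    (hL : ContDiffOn ℝ k (fun q : (Fin n → ℝ) × (Fin r → Fin n → ℝ) => L q.1 q.2) (U ×ˢ univ))
    (hU : IsOpen U) (hmk : m + 1 ≤ k) (F : Fin r) (A : Fin n) :
    ContDiffOn ℝ m (fun q : (Fin n → ℝ) × (Fin r → Fin n → ℝ) => pdM (L q.1) F A q.2)
      (U ×ˢ univ) := by
  refine (hL.lineDeriv (hU.prod isOpen_univ) hmk (0, Pi.single F (Pi.single A 1))).congr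
    fun q _ => ?_
  rw [pdM_eq_lineDeriv]
  exact lineDeriv_comp_prodMk_right
    (fun q : (Fin n → ℝ) × (Fin r → Fin n → ℝ) => L q.1 q.2) _ _ _

/-- If the smooth Lagrangian `L(x, ẋ)` satisfies the fundamental
equations in `ẋ` for each `x ∈ U`, then along any smooth path `γ : V → U` the
Euler–Lagrange expression contains no second derivatives of `γ`:
`Σ_F ∂/∂t^F [(∂L/∂ẋ_F^A)(γ(t), Dγ(t))] = Σ_{F,B} (∂γ^B/∂t^F)(t) · (∂²L/∂x^B∂ẋ_F^A)(γ(t), Dγ(t))`. -/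
theorem statement_1 (n r : ℕ) (U : Set (Fin n → ℝ)) (hU : IsOpen U)
    (L : (Fin n → ℝ) → (Fin r → Fin n → ℝ) → ℝ)
    (hL : ContDiffOn ℝ (⊤ : ℕ∞)
      (fun q : (Fin n → ℝ) × (Fin r → Fin n → ℝ) => L q.1 q.2)
      (U ×ˢ (Set.univ : Set (Fin r → Fin n → ℝ))))
    (hfund : ∀ x ∈ U, FundEqs (L x)) :
    ∀ (V : Set (Fin r → ℝ)), IsOpen V →
      ∀ (γ : (Fin r → ℝ) → (Fin n → ℝ)),
        ContDiffOn ℝ (⊤ : ℕ∞) γ V → Set.MapsTo γ V U →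
        ∀ (A : Fin n), ∀ t ∈ V,
          ∑ F, pdV (fun s => pdM (L (γ s)) F A (vel γ s)) F t
            = ∑ F, ∑ B, vel γ t F B *
                pdV (fun x => pdM (L x) F A (vel γ t)) B (γ t) := by
  intro V hV γ hγ hmaps A t ht
  have hsmooth : ((⊤ : ℕ∞) : WithTop ℕ∞) + 1 ≤ (⊤ : ℕ∞) := by exact_mod_cast le_top
  have hγt : ContDiffAt ℝ (⊤ : ℕ∞) γ t := hγ.contDiffAt (hV.mem_nhds ht)
  have hvel : DifferentiableAt ℝ (vel γ) t :=
    ((hγ.vel hV hsmooth).contDiffAt (hV.mem_nhds ht)).differentiableAt (by simp)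
  have hψ (F : Fin r) : DifferentiableAt ℝ
      (fun q : (Fin n → ℝ) × (Fin r → Fin n → ℝ) => pdM (L q.1) F A q.2) (γ t, vel γ t) :=
    ((hL.pdM_uncurry hU hsmooth F A).contDiffAt
      ((hU.prod isOpen_univ).mem_nhds ⟨hmaps ht, trivial⟩)).differentiableAt (by simp)
  have hacc : ∑ F, ∑ G, ∑ B, pdV (fun s => vel γ s G B) F t
      * pdM (pdM (L (γ t)) F A) G B (vel γ t) = 0 := by
    refine Finset.sum_sum_eq_zero_of_antisymm _ fun F G => ?_
    rw [← Finset.sum_neg_distrib]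
    refine Finset.sum_congr rfl fun B _ => ?_
    rw [pdV_vel_comm (hγt.of_le (by norm_cast)) F G B, ← mul_neg,
      eq_neg_of_add_eq_zero_left (hfund _ (hmaps ht) G F B A (vel γ t))]
  calc _ = ∑ F, (∑ B, vel γ t F B * pdV (fun x => pdM (L x) F A (vel γ t)) B (γ t)
        + ∑ G, ∑ B, pdV (fun s => vel γ s G B) F t * pdM (pdM (L (γ t)) F A) G B (vel γ t)) :=
        Finset.sum_congr rfl fun F _ =>
          pdV_comp_prodMk (hψ F) (hγt.differentiableAt (by simp)) hvel F
    _ = _ := by rw [Finset.sum_add_distrib, hacc, add_zero]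
end
end

section
/- Let L : Matrix(r×n, ℝ) → ℝ be smooth. Then the following two conditions together — (covariance) L(h·ẋ) = det h · L(ẋ) for all ẋ and all invertible h ∈ Matrix(r×r, ℝ), and (fundamental equations) ∂²L/∂ẋ_F^A∂ẋ_G^B + ∂²L/∂ẋ_G^A∂ẋ_F^B = 0 for all F, G ∈ {1,…,r} and A, B ∈ {1,…,n} — hold if and only if there exists an alternating r-multilinear map ω : (ℝⁿ)^r → ℝ such that L(ẋ) = ω(ẋ_1, …, ẋ_r), where ẋ_1, …, ẋ_r are the rows of ẋ. -/
open MeasureTheory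
open scoped BigOperators

noncomputable section

/-! Covariance under the diagonal matrices `diag(1, …, c, …, 1)`, `c ≠ 0`, makes `L` homogeneous
of degree one in each row, and a function that is differentiable at `0` and homogeneous of degree
one equals its derivative at `0`; so `L` is linear in each row. Covariance under a transposition
makes it alternating. Conversely, an alternating map transforms by `det h`, and its second
derivative `∂²ω/∂m_{i₁}^{j₁}∂m_{i₂}^{j₂}` is `ω` with rows `i₁, i₂` replaced by `e_{j₁}, e_{j₂}`
(zero if `i₁ = i₂`), which changes sign when `i₁` and `i₂` are exchanged. -/

open Function

section MatrixFunctions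

variable {a b : ℕ}

lemma fdet_diagonal (d : Fin a → ℝ) : fdet (Matrix.diagonal d) = ∏ i, d i :=
  Matrix.det_diagonal

lemma fdet_permMatrix (σ : Equiv.Perm (Fin a)) : fdet (σ.permMatrix ℝ) = σ.sign :=
  Matrix.det_permutation σ

lemma mmul_diagonal (d : Fin a → ℝ) (v : Fin a → Fin b → ℝ) :
    mmul (Matrix.diagonal d) v = fun i => d i • v i := by
  funext i k
  exact Matrix.diagonal_mul d v i k

lemma mmul_permMatrix (σ : Equiv.Perm (Fin a)) (v : Fin a → Fin b → ℝ) :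
    mmul (σ.permMatrix ℝ) v = v ∘ σ :=
  PEquiv.toMatrix_toPEquiv_mul σ (Matrix.of v)

end MatrixFunctions

lemma eq_fderiv_zero_apply_of_homogeneous {E F : Type*} [NormedAddCommGroup E] [NormedSpace ℝ E]
    [NormedAddCommGroup F] [NormedSpace ℝ F] {g : E → F} (hg : DifferentiableAt ℝ g 0)
    (hhom : ∀ c : ℝ, c ≠ 0 → ∀ v, g (c • v) = c • g v) (v : E) :
    g v = fderiv ℝ g 0 v := by
  have hg0 : g 0 = 0 := by
    have h := hhom 2 two_ne_zero 0
    rw [smul_zero, two_smul] at h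
    simpa using h
  have hline : (fun c : ℝ => g (c • v)) = fun c => c • g v := by
    funext c
    rcases eq_or_ne c 0 with rfl | hc
    · simp [hg0]
    · exact hhom c hc v
  have hderiv : HasDerivAt (fun c : ℝ => g (c • v)) (fderiv ℝ g 0 v) 0 := by
    have hF : HasFDerivAt g (fderiv ℝ g 0) ((0 : ℝ) • v) := by
      rw [zero_smul]; exact hg.hasFDerivAt
    exact hF.comp_hasDerivAt (0 : ℝ) (by simpa using (hasDerivAt_id (0 : ℝ)).smul_const v)
  rw [hline] at hderiv
  exact (hderiv.unique (by simpa using (hasDerivAt_id (0 : ℝ)).smul_const (g v))).symm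

section PartialDerivatives

variable {a b : ℕ}

lemma pdM_eq_deriv_update (L : (Fin a → Fin b → ℝ) → ℝ) (i : Fin a) (j : Fin b)
    (m : Fin a → Fin b → ℝ) :
    pdM L i j m = deriv (fun t : ℝ => L (update m i (m i + t • Pi.single j 1))) 0 := by
  unfold pdM
  congr 1
  funext t
  congr 1
  funext i' j'
  rcases eq_or_ne i' i with rfl | hi
  · simp [Pi.single_apply]
  · simp [hi]

lemma pdM_comp_update_self (F : (Fin a → Fin b → ℝ) → ℝ) (i : Fin a) (v : Fin b → ℝ)
    (j : Fin b) (m : Fin a → Fin b → ℝ) :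
    pdM (fun m' => F (update m' i v)) i j m = 0 := by
  simp [pdM_eq_deriv_update]

lemma pdM_comp_update_of_ne (F : (Fin a → Fin b → ℝ) → ℝ) {i₁ i₂ : Fin a} (hne : i₁ ≠ i₂)
    (v : Fin b → ℝ) (j : Fin b) (m : Fin a → Fin b → ℝ) :
    pdM (fun m' => F (update m' i₂ v)) i₁ j m = pdM F i₁ j (update m i₂ v) := by
  simp only [pdM_eq_deriv_update, update_comm hne, update_of_ne hne]

lemma MultilinearMap.pdM_eq (f : MultilinearMap ℝ (fun _ : Fin a => Fin b → ℝ) ℝ) (i : Fin a)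
    (j : Fin b) (m : Fin a → Fin b → ℝ) :
    pdM f i j m = f (update m i (Pi.single j 1)) := by
  rw [pdM_eq_deriv_update]
  have hline : (fun t : ℝ => f (update m i (m i + t • Pi.single j 1)))
      = fun t => f m + t * f (update m i (Pi.single j 1)) := by
    funext t
    rw [f.map_update_add, f.map_update_smul, update_eq_self, smul_eq_mul]
  rw [hline]
  simp

end PartialDerivatives

namespace AlternatingMap

variable {n r : ℕ} (ω : AlternatingMap ℝ (Fin n → ℝ) ℝ (Fin r))

lemma fundEqs : FundEqs ω := by
  intro i₁ i₂ j₁ j₂ m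
  have hpd : ∀ i j, pdM ω i j = fun m => ω (update m i (Pi.single j 1)) := fun i j =>
    funext (ω.toMultilinearMap.pdM_eq i j)
  rw [hpd, hpd]
  rcases eq_or_ne i₁ i₂ with rfl | hne
  · simp only [pdM_comp_update_self, add_zero]
  rw [pdM_comp_update_of_ne _ hne, pdM_comp_update_of_ne _ hne.symm, hpd, hpd]
  have hswap : update (update m i₁ (Pi.single j₂ 1)) i₂ (Pi.single j₁ 1)
      = update (update m i₂ (Pi.single j₂ 1)) i₁ (Pi.single j₁ 1) ∘ Equiv.swap i₁ i₂ := by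
    funext k
    simp only [comp_apply, update_apply, Equiv.swap_apply_def]
    grind
  dsimp only
  rw [hswap, ω.map_swap _ hne, add_neg_cancel]

lemma map_mmul (h : Fin r → Fin r → ℝ) (v : Fin r → Fin n → ℝ) :
    ω (mmul h v) = fdet h * ω v := by
  have hmul : mmul h v = fun i => Fintype.linearCombination ℝ v (h i) := by
    funext i k
    simp [mmul, Fintype.linearCombination_apply, Finset.sum_apply]
  have hbasis : (fun i => Fintype.linearCombination ℝ v (Pi.basisFun ℝ (Fin r) i)) = v := by
    funext i
    simp [Fintype.linearCombination_apply_single]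
  have hdet := congr($((ω.compLinearMap (Fintype.linearCombination ℝ v)).eq_smul_basis_det
    (Pi.basisFun ℝ (Fin r))) h)
  rw [AlternatingMap.smul_apply, Pi.basisFun_det_apply] at hdet
  simp only [compLinearMap_apply, ← hmul, hbasis, smul_eq_mul] at hdet
  rw [hdet, mul_comm]
  rfl

end AlternatingMap

section Covariant

variable {n r : ℕ} {L : (Fin r → Fin n → ℝ) → ℝ}
  (hcov : ∀ (v : Fin r → Fin n → ℝ) (h : Fin r → Fin r → ℝ), fdet h ≠ 0 →
    L (mmul h v) = fdet h * L v)
include hcov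

lemma map_update_smul_of_covariant (m : Fin r → Fin n → ℝ) (i : Fin r) {c : ℝ} (hc : c ≠ 0)
    (w : Fin n → ℝ) : L (update m i (c • w)) = c * L (update m i w) := by
  have hdet : fdet (Matrix.diagonal (Pi.mulSingle i c)) = c := by
    simp [fdet_diagonal, Finset.prod_pi_mulSingle']
  have hmul : mmul (Matrix.diagonal (Pi.mulSingle i c)) (update m i w) = update m i (c • w) := by
    rw [mmul_diagonal]
    funext k
    rcases eq_or_ne k i with rfl | hk
    · simp
    · simp [hk]
  have h := hcov (update m i w) _ (hdet ▸ hc)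
  rwa [hmul, hdet] at h

lemma map_swap_of_covariant (v : Fin r → Fin n → ℝ) {i j : Fin r} (hij : i ≠ j) :
    L (v ∘ Equiv.swap i j) = -L v := by
  have hdet : fdet ((Equiv.swap i j).permMatrix ℝ) = -1 := by
    rw [fdet_permMatrix, Equiv.Perm.sign_swap hij]
    simp
  have h := hcov v ((Equiv.swap i j).permMatrix ℝ) (by rw [hdet]; norm_num)
  rwa [hdet, mmul_permMatrix, neg_one_mul] at h

lemma exists_alternatingMap_of_covariant (hL : Differentiable ℝ L) :
    ∃ ω : AlternatingMap ℝ (Fin n → ℝ) ℝ (Fin r), ∀ m, L m = ω m := by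
  have hrow : ∀ m i (v : Fin n → ℝ),
      L (update m i v) = fderiv ℝ (fun w => L (update m i w)) 0 v := fun m i =>
    eq_fderiv_zero_apply_of_homogeneous
      ((hL _).comp _ (hasFDerivAt_update (𝕜 := ℝ) m 0).differentiableAt)
      (fun c hc w => map_update_smul_of_covariant hcov m i hc w)
  let f : MultilinearMap ℝ (fun _ : Fin r => Fin n → ℝ) ℝ :=
    .mk' L (fun m i x y => by rw [hrow m i (x + y), hrow m i x, hrow m i y, map_add])
      (fun m i c x => by rw [hrow m i (c • x), hrow m i x, map_smul])
  refine ⟨{ f with map_eq_zero_of_eq' := fun v i j hv hij => ?_ }, fun m => rfl⟩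
  have h := map_swap_of_covariant hcov v hij
  have hfix : v ∘ Equiv.swap i j = v := funext (Equiv.apply_swap_eq_self hv)
  change L v = 0
  linarith [hfix ▸ h]

end Covariant

/-- A smooth `L : Matrix(r×n, ℝ) → ℝ` satisfies the covariance
condition `L(h·ẋ) = det h · L(ẋ)` for all invertible `h` together with the
fundamental equations if and only if `L` is given by an alternating `r`-multilinear
map evaluated on the rows of its argument. -/
theorem statement_2 (n r : ℕ) (L : (Fin r → Fin n → ℝ) → ℝ)
    (hL : ContDiff ℝ (⊤ : ℕ∞) L) :
    ((∀ (xdot : Fin r → Fin n → ℝ) (h : Fin r → Fin r → ℝ), fdet h ≠ 0 →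
        L (mmul h xdot) = fdet h * L xdot) ∧ FundEqs L)
    ↔ ∃ ω : AlternatingMap ℝ (Fin n → ℝ) ℝ (Fin r), ∀ m : Fin r → Fin n → ℝ,
        L m = ω m := by
  constructor
  · rintro ⟨hcov, -⟩
    exact exists_alternatingMap_of_covariant hcov (hL.differentiable (by simp))
  · rintro ⟨ω, hω⟩
    obtain rfl : L = ω := funext hω
    exact ⟨fun v h _ => ω.map_mmul h v, ω.fundEqs⟩
end
end

section
/- Let L : Matrix((n+1)×(k+1), ℝ) → ℝ satisfy the right-covariance condition L(M·g) = det g · L(M) for all M and all invertible g ∈ Matrix((k+1)×(k+1), ℝ). Write M in block form with p = (M_A^K) the upper-left n×k block, v = (M_A^{k+1}) the last column without the corner, w = (M_{n+1}^K) the last row without the corner, and u = M_{n+1}^{k+1} the corner entry. Then for every M with u ≠ 0, L(M) = u · L(M̃), where M̃ is the matrix with blocks p̃ = p − u⁻¹·v·w (the n×k matrix with entries p_A^K − u⁻¹ v_A w^K), last column ṽ = u⁻¹ v, last row w̃ = 0, and corner ũ = 1. -/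
open MeasureTheory
open scoped BigOperators

noncomputable section

/-- Let `L` be a right-covariant function of an `(n+1) × (k+1)`
matrix: `L(M·g) = det g · L(M)` for all invertible `g`.  Writing `u` for the corner
entry, `v` for the last column, `w` for the last row and `p` for the upper-left
block, one has, whenever `u ≠ 0`:
`L(M) = u · L(M̃)` where `M̃` has blocks `p̃ = p − u⁻¹ v w`, `ṽ = u⁻¹ v`, `w̃ = 0`,
`ũ = 1`. -/
theorem statement_8 (n k : ℕ) (L : (Fin (n + 1) → Fin (k + 1) → ℝ) → ℝ)
    (hcov : ∀ (M : Fin (n + 1) → Fin (k + 1) → ℝ) (g : Fin (k + 1) → Fin (k + 1) → ℝ),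
      fdet g ≠ 0 → L (mmul M g) = fdet g * L M) :
    ∀ M : Fin (n + 1) → Fin (k + 1) → ℝ, M (Fin.last n) (Fin.last k) ≠ 0 →
      L M = M (Fin.last n) (Fin.last k) *
        L (fun i j =>
            if i = Fin.last n then (if j = Fin.last k then 1 else 0)
            else if j = Fin.last k then (M (Fin.last n) (Fin.last k))⁻¹ * M i j
            else M i j - (M (Fin.last n) (Fin.last k))⁻¹ *
                M i (Fin.last k) * M (Fin.last n) j) := by
  intro M hu
  set u := M (Fin.last n) (Fin.last k) with hudef
  set g : Fin (k+1) → Fin (k+1) → ℝ := fun j' j =>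
    if j = Fin.last k then (if j' = Fin.last k then u⁻¹ else 0)
    else if j' = j then (1:ℝ)
    else if j' = Fin.last k then -u⁻¹ * M (Fin.last n) j else 0 with hg
  have hdet : fdet g = u⁻¹ := by
    unfold fdet
    rw [Matrix.det_succ_column (Matrix.of g) (Fin.last k)]
    rw [Finset.sum_eq_single (Fin.last k)]
    · have hsub : (Matrix.of g).submatrix (Fin.last k).succAbove (Fin.last k).succAbove
        = (1 : Matrix (Fin k) (Fin k) ℝ) := by
        ext i j
        simp only [Matrix.submatrix_apply, Fin.succAbove_last, Matrix.of_apply, hg,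
          Matrix.one_apply]
        have h1 : (Fin.castSucc j : Fin (k+1)) ≠ Fin.last k := Fin.castSucc_lt_last j |>.ne
        have h2 : (Fin.castSucc i : Fin (k+1)) ≠ Fin.last k := Fin.castSucc_lt_last i |>.ne
        simp [h1, h2, Fin.castSucc_inj]
      rw [hsub, Matrix.det_one]
      have : ((-1:ℝ)) ^ ((Fin.last k : ℕ) + (Fin.last k : ℕ)) = 1 :=
        Even.neg_one_pow ⟨k, by simp [Fin.val_last]⟩
      simp [hg, this]
    · intro i _ hi
      have : Matrix.of g i (Fin.last k) = 0 := by simp [hg, hi]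
      simp [this]
    · intro h; exact absurd (Finset.mem_univ _) h
  have hdetne : fdet g ≠ 0 := by rw [hdet]; exact inv_ne_zero hu
  have hmul : mmul M g = (fun i j =>
      if i = Fin.last n then (if j = Fin.last k then 1 else 0)
      else if j = Fin.last k then u⁻¹ * M i j
      else M i j - u⁻¹ * M i (Fin.last k) * M (Fin.last n) j) := by
    funext i j
    unfold mmul
    by_cases hj : j = Fin.last k
    · subst hj
      have : ∀ j' : Fin (k+1), M i j' * g j' (Fin.last k)
          = if j' = Fin.last k then M i j' * u⁻¹ else 0 := by
        intro j'; simp only [hg]; split_ifs <;> simp_all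
      rw [Finset.sum_congr rfl (fun j' _ => this j'), Finset.sum_ite_eq']
      by_cases hi : i = Fin.last n
      · subst hi; simp [← hudef, mul_inv_cancel₀ hu]
      · simp [hi, mul_comm]
    · have : ∀ j' : Fin (k+1), M i j' * g j' j
          = (if j' = j then M i j' else 0)
            + (if j' = Fin.last k then M i j' * (-u⁻¹ * M (Fin.last n) j) else 0) := by
        intro j'; simp only [hg, if_neg hj]
        by_cases h1 : j' = j
        · subst h1; simp [hj]
        · by_cases h2 : j' = Fin.last k <;> simp [h1, h2, Ne.symm hj]
      rw [Finset.sum_congr rfl (fun j' _ => this j'), Finset.sum_add_distrib,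
        Finset.sum_ite_eq', Finset.sum_ite_eq']
      by_cases hi : i = Fin.last n
      · subst hi
        simp only [if_pos rfl, if_neg hj, Finset.mem_univ, if_true, ← hudef]
        field_simp
        ring
      · simp only [if_neg hi, if_neg hj, Finset.mem_univ, if_true]
        ring
  have key := hcov M g hdetne
  rw [hmul, hdet] at key
  rw [key]
  field_simp
end
end
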